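/- arXiv:2112.13824 — 9 statements merged into one kernel-verified Lean document; each statement's English description precedes it below -/
import Mathlib

section
/- In the two-day equitable scheduling problem, any k-equitable pair of schedules can be transformed into a k-equitable pair in which the schedule of day two is the reverse of the schedule of day one. -/
/-!
Keep the day-one schedule and run day two in reverse order. Then the clients served on day two up
to and including `j` are exactly those served on day one at or after `j`. Let `j'` be the one
among them that the given day-two schedule serves last: `j` finishes day one no later than `j'`,
and day two no later than `j'` does in the given schedule, so its total is at most `k`.
-/

def C {n : ℕ} (σ : Equiv.Perm (Fin n)) (p : Fin n → ℕ) (j : Fin n) : ℕ :=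
  ∑ j' ∈ Finset.univ.filter (fun j' => σ j' ≤ σ j), p j'

open Finset

section

variable {n : ℕ}

lemma C_le_C_of_forall {σ τ : Equiv.Perm (Fin n)} (p : Fin n → ℕ) {j j' : Fin n}
    (h : ∀ x, σ x ≤ σ j → τ x ≤ τ j') : C σ p j ≤ C τ p j' :=
  sum_le_sum_of_subset fun x hx => by
    simp only [mem_filter, mem_univ, true_and] at hx ⊢
    exact h x hx

lemma C_mono {σ : Equiv.Perm (Fin n)} (p : Fin n → ℕ) {j j' : Fin n} (h : σ j ≤ σ j') :
    C σ p j ≤ C σ p j' :=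
  C_le_C_of_forall p fun _ hx => hx.trans h

lemma val_trans_revPerm (σ : Equiv.Perm (Fin n)) (j : Fin n) :
    ((σ.trans Fin.revPerm) j : ℕ) = n - 1 - σ j := by
  simp only [Equiv.trans_apply, Fin.revPerm_apply, Fin.val_rev]
  omega

lemma exists_C_trans_revPerm_le (σ₁ σ₂ : Equiv.Perm (Fin n)) (p1 p2 : Fin n → ℕ) (j : Fin n) :
    ∃ j', C σ₁ p1 j + C (σ₁.trans Fin.revPerm) p2 j ≤ C σ₁ p1 j' + C σ₂ p2 j' := by
  obtain ⟨j', hj', hmax⟩ := exists_max_image (univ.filter fun x => σ₁ j ≤ σ₁ x) σ₂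
    ⟨j, by simp⟩
  simp only [mem_filter, mem_univ, true_and] at hj' hmax
  refine ⟨j', Nat.add_le_add (C_mono p1 hj') (C_le_C_of_forall p2 fun x hx => hmax x ?_)⟩
  simpa only [Equiv.trans_apply, Fin.revPerm_apply, Fin.rev_le_rev] using hx

end

theorem stmt3 (n k : ℕ) (p1 p2 : Fin n → ℕ)
    (h : ∃ σ₁ σ₂ : Equiv.Perm (Fin n), ∀ j, C σ₁ p1 j + C σ₂ p2 j ≤ k) :
    ∃ σ₁ σ₂ : Equiv.Perm (Fin n), (∀ j, (σ₂ j : ℕ) = n - 1 - (σ₁ j : ℕ)) ∧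
      ∀ j, C σ₁ p1 j + C σ₂ p2 j ≤ k := by
  obtain ⟨σ₁, σ₂, hk⟩ := h
  refine ⟨σ₁, σ₁.trans Fin.revPerm, val_trans_revPerm σ₁, fun j => ?_⟩
  obtain ⟨j', hj'⟩ := exists_C_trans_revPerm_le σ₁ σ₂ p1 p2 j
  exact hj'.trans (hk j')
end

section
/- In a pair of schedules for two days where the day-two schedule is the reverse of the day-one schedule, if two clients j₁, j₂ are adjacent on day one with j₂ directly before j₁, and p(1,j₂) > p(2,j₂) while p(1,j₁) ≤ p(2,j₁), then swapping j₁ and j₂ on both days does not increase the total completion time of either client and leaves all other clients' total completion times unchanged. -/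
lemma C_trans {n : ℕ} (σ e : Equiv.Perm (Fin n)) (p : Fin n → ℕ) (j : Fin n) :
    C (e.trans σ) p j = ∑ k ∈ Finset.univ.filter (fun k => σ k ≤ σ (e j)), p (e.symm k) := by
  unfold C
  refine Finset.sum_equiv e (fun k => ?_) (fun k _ => ?_)
  · rw [Finset.mem_filter, Finset.mem_filter]; simp [Equiv.trans_apply]
  · simp

lemma C_adj {n : ℕ} (σ : Equiv.Perm (Fin n)) (p : Fin n → ℕ) (a b : Fin n)
    (hadj : (σ b : ℕ) + 1 = (σ a : ℕ)) : C σ p a = C σ p b + p a := by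
  have hset : Finset.univ.filter (fun k => σ k ≤ σ a)
      = insert a (Finset.univ.filter (fun k => σ k ≤ σ b)) := by
    ext k
    simp only [Finset.mem_filter, Finset.mem_insert, Finset.mem_univ, true_and, Fin.le_def]
    constructor
    · intro h
      rcases eq_or_ne ((σ k : ℕ)) ((σ a : ℕ)) with h' | h'
      · left; exact σ.injective (Fin.val_injective h')
      · right; omega
    · rintro (rfl | h)
      · exact le_refl _
      · omega
  have hnot : a ∉ Finset.univ.filter (fun k => σ k ≤ σ b) := by
    simp only [Finset.mem_filter, Finset.mem_univ, true_and, Fin.le_def]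
    omega
  unfold C
  rw [hset, Finset.sum_insert hnot, add_comm]

lemma C_swap_a {n : ℕ} (σ : Equiv.Perm (Fin n)) (p : Fin n → ℕ) (a b : Fin n)
    (hadj : (σ b : ℕ) + 1 = (σ a : ℕ)) :
    C ((Equiv.swap a b).trans σ) p a + p b = C σ p a := by
  have hab : a ≠ b := by
    intro h; rw [h] at hadj; omega
  rw [C_trans, Equiv.swap_apply_left]
  have hb : b ∈ Finset.univ.filter (fun k => σ k ≤ σ b) := by simp
  have ha : a ∉ Finset.univ.filter (fun k => σ k ≤ σ b) := by
    simp only [Finset.mem_filter, Finset.mem_univ, true_and, Fin.le_def]; omega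
  rw [← Finset.sum_erase_add _ _ hb]
  have h1 : ∀ k ∈ (Finset.univ.filter (fun k => σ k ≤ σ b)).erase b,
      p ((Equiv.swap a b).symm k) = p k := by
    intro k hk
    have hkb : k ≠ b := Finset.ne_of_mem_erase hk
    have hka : k ≠ a := by
      intro h; rw [h] at hk; exact ha (Finset.mem_of_mem_erase hk)
    rw [Equiv.symm_swap, Equiv.swap_apply_of_ne_of_ne hka hkb]
  rw [Finset.sum_congr rfl h1, Equiv.symm_swap, Equiv.swap_apply_right]
  have : (∑ k ∈ (Finset.univ.filter (fun k => σ k ≤ σ b)).erase b, p k) + p b = C σ p b := by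
    unfold C; exact Finset.sum_erase_add _ _ hb
  rw [C_adj σ p a b hadj, ← this]
  ring

lemma C_swap_b {n : ℕ} (σ : Equiv.Perm (Fin n)) (p : Fin n → ℕ) (a b : Fin n)
    (hadj : (σ b : ℕ) + 1 = (σ a : ℕ)) :
    C ((Equiv.swap a b).trans σ) p b = C σ p a := by
  rw [C_trans, Equiv.swap_apply_right]
  unfold C
  refine Finset.sum_equiv (Equiv.swap a b) (fun k => ?_) (fun k _ => ?_)
  · simp only [Finset.mem_filter, Finset.mem_univ, true_and]
    rcases eq_or_ne k a with rfl | hka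
    · rw [Equiv.swap_apply_left]
      simp only [Fin.le_def]; omega
    rcases eq_or_ne k b with rfl | hkb
    · rw [Equiv.swap_apply_right]
      simp only [Fin.le_def]; omega
    · rw [Equiv.swap_apply_of_ne_of_ne hka hkb]
  · simp

lemma C_swap_other {n : ℕ} (σ : Equiv.Perm (Fin n)) (p : Fin n → ℕ) (a b j : Fin n)
    (hadj : (σ b : ℕ) + 1 = (σ a : ℕ)) (hja : j ≠ a) (hjb : j ≠ b) :
    C ((Equiv.swap a b).trans σ) p j = C σ p j := by
  rw [C_trans, Equiv.swap_apply_of_ne_of_ne hja hjb]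
  have hva : (σ j : ℕ) ≠ (σ a : ℕ) := fun h => hja (σ.injective (Fin.val_injective h))
  have hvb : (σ j : ℕ) ≠ (σ b : ℕ) := fun h => hjb (σ.injective (Fin.val_injective h))
  unfold C
  refine Finset.sum_equiv (Equiv.swap a b) (fun k => ?_) (fun k _ => ?_)
  · simp only [Finset.mem_filter, Finset.mem_univ, true_and]
    rcases eq_or_ne k a with rfl | hka
    · rw [Equiv.swap_apply_left]
      simp only [Fin.le_def]; omega
    rcases eq_or_ne k b with rfl | hkb
    · rw [Equiv.swap_apply_right]
      simp only [Fin.le_def]; omega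
    · rw [Equiv.swap_apply_of_ne_of_ne hka hkb]
  · simp

theorem stmt4 (n : ℕ) (p1 p2 : Fin n → ℕ) (σ₁ σ₂ : Equiv.Perm (Fin n)) (j₁ j₂ : Fin n)
    (hrev : ∀ j, (σ₂ j : ℕ) = n - 1 - (σ₁ j : ℕ))
    (hadj : (σ₁ j₂ : ℕ) + 1 = (σ₁ j₁ : ℕ))
    (h2 : p2 j₂ < p1 j₂) (h1 : p1 j₁ ≤ p2 j₁) :
    (C ((Equiv.swap j₁ j₂).trans σ₁) p1 j₁ + C ((Equiv.swap j₁ j₂).trans σ₂) p2 j₁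
        ≤ C σ₁ p1 j₁ + C σ₂ p2 j₁) ∧
    (C ((Equiv.swap j₁ j₂).trans σ₁) p1 j₂ + C ((Equiv.swap j₁ j₂).trans σ₂) p2 j₂
        ≤ C σ₁ p1 j₂ + C σ₂ p2 j₂) ∧
    (∀ j, j ≠ j₁ → j ≠ j₂ →
      C ((Equiv.swap j₁ j₂).trans σ₁) p1 j + C ((Equiv.swap j₁ j₂).trans σ₂) p2 j
        = C σ₁ p1 j + C σ₂ p2 j) := by
  have hadj2 : (σ₂ j₁ : ℕ) + 1 = (σ₂ j₂ : ℕ) := by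
    have h1lt := (σ₁ j₁).isLt
    rw [hrev j₁, hrev j₂]
    omega
  have hswapcomm : Equiv.swap j₁ j₂ = Equiv.swap j₂ j₁ := Equiv.swap_comm j₁ j₂
  refine ⟨?_, ?_, ?_⟩
  · -- j₁
    have e1 := C_swap_a σ₁ p1 j₁ j₂ hadj
    have e2 := C_swap_b σ₂ p2 j₂ j₁ hadj2
    rw [hswapcomm] at *
    have e3 := C_adj σ₂ p2 j₂ j₁ hadj2
    omega
  · -- j₂
    have e1 := C_swap_b σ₁ p1 j₁ j₂ hadj
    have e2 := C_swap_a σ₂ p2 j₂ j₁ hadj2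
    rw [hswapcomm] at *
    have e3 := C_adj σ₁ p1 j₁ j₂ hadj
    omega
  · intro j hj1 hj2
    rw [C_swap_other σ₁ p1 j₁ j₂ j hadj hj1 hj2,
        hswapcomm, C_swap_other σ₂ p2 j₂ j₁ j hadj2 hj2 hj1]
end

section
/- In a pair of reversed schedules for two days, if clients j₁, j₂ both satisfy p(1,j) ≤ p(2,j), p(1,j₁) ≤ p(1,j₂), and j₁ is scheduled directly after j₂ on day one, then after swapping j₁ and j₂ on both days, the maximum of the two clients' total completion times does not exceed the total completion time of j₂ before the swap. -/
/-!
Swapping two clients relabels the schedule, so a completion time after the swap is a prefix sum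
of the old schedule with the processing times of the two clients exchanged. When the clients are
adjacent the swap only moves them past each other: every other prefix contains both or neither.
Day one moves `j₂` behind `j₁` and day two, being reversed, moves `j₁` behind `j₂`; the two
resulting completion times then differ from `C_{j₂}(σ)` by `p(1,j₁) - p(1,j₂)` and
`p(1,j₁) - p(2,j₁)`, both nonpositive.
-/

open Finset Equiv

namespace Finset

variable {ι M : Type*} [DecidableEq ι] [AddCommMonoid M]

theorem sum_comp_swap_of_mem_iff (s : Finset ι) (f : ι → M) {a b : ι} (h : a ∈ s ↔ b ∈ s) :
    ∑ x ∈ s, f (swap a b x) = ∑ x ∈ s, f x := by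
  refine sum_equiv (swap a b) (fun x => ?_) (fun _ _ => rfl)
  rw [swap_apply_def]
  split_ifs with hxa hxb
  · exact hxa ▸ h
  · exact hxb ▸ h.symm
  · rfl

theorem sum_comp_swap_add_of_mem_of_notMem (s : Finset ι) (f : ι → M) {a b : ι}
    (hb : b ∈ s) (ha : a ∉ s) :
    ∑ x ∈ s, f (swap a b x) + f b = ∑ x ∈ s, f x + f a := by
  have hrest : ∑ x ∈ s.erase b, f (swap a b x) = ∑ x ∈ s.erase b, f x :=
    sum_comp_swap_of_mem_iff _ f <| iff_of_false (fun h => ha (mem_of_mem_erase h))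
      (notMem_erase b s)
  rw [← insert_erase hb, sum_insert (notMem_erase b s), sum_insert (notMem_erase b s),
    swap_apply_right, hrest]
  abel

end Finset

variable {n : ℕ} (σ : Perm (Fin n)) (p : Fin n → ℕ)

theorem C_trans_s5 (τ : Perm (Fin n)) (j : Fin n) :
    C (τ.trans σ) p j = C σ (p ∘ τ.symm) (τ j) :=
  sum_equiv τ (fun _ => by simp only [mem_filter, mem_univ, true_and]; rfl) (by simp)

theorem C_of_val_add_one_eq {a b : Fin n} (hab : (σ b : ℕ) + 1 = σ a) :
    C σ p a = C σ p b + p a := by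
  have hprefix :
      univ.filter (fun x => σ x ≤ σ a) = insert a (univ.filter (fun x => σ x ≤ σ b)) := by
    ext x
    simp only [mem_filter, mem_univ, true_and, mem_insert, Fin.le_def]
    refine ⟨fun hx => ?_, by rintro (rfl | hx) <;> omega⟩
    rcases hx.eq_or_lt with hx | hx
    · exact .inl (σ.injective (Fin.val_injective hx))
    · exact .inr (by omega)
  have ha : a ∉ univ.filter (fun x => σ x ≤ σ b) := by
    simp only [mem_filter, mem_univ, true_and, Fin.le_def]
    omega
  rw [C, hprefix, sum_insert ha, add_comm, ← C]

theorem C_swap_trans_right {a b : Fin n} (hba : σ b ≤ σ a) :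
    C ((swap a b).trans σ) p b = C σ p a := by
  rw [C_trans_s5, symm_swap, swap_apply_right, C]
  exact sum_comp_swap_of_mem_iff _ p (by simp [hba])

theorem C_swap_trans_left_add {a b : Fin n} (hba : σ b < σ a) :
    C ((swap a b).trans σ) p a + p b = C σ p b + p a := by
  rw [C_trans_s5, symm_swap, swap_apply_left, C, C]
  exact sum_comp_swap_add_of_mem_of_notMem _ p (by simp) (by simpa using hba)

theorem C_swap_trans_of_ne_of_ne {a b j : Fin n} (hab : (σ b : ℕ) + 1 = σ a)
    (hja : j ≠ a) (hjb : j ≠ b) :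
    C ((swap a b).trans σ) p j = C σ p j := by
  rw [C_trans_s5, symm_swap, swap_apply_of_ne_of_ne hja hjb, C]
  refine sum_comp_swap_of_mem_iff _ p ?_
  have hja' : (σ j : ℕ) ≠ σ a := fun h => hja (σ.injective (Fin.val_injective h))
  have hjb' : (σ j : ℕ) ≠ σ b := fun h => hjb (σ.injective (Fin.val_injective h))
  simp only [mem_filter, mem_univ, true_and, Fin.le_def]
  omega

theorem stmt5_general (n : ℕ) (p1 p2 : Fin n → ℕ) (σ₁ σ₂ : Equiv.Perm (Fin n)) (j₁ j₂ : Fin n)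
    (hrev : ∀ j, (σ₂ j : ℕ) = n - 1 - (σ₁ j : ℕ))
    (hadj : (σ₁ j₂ : ℕ) + 1 = (σ₁ j₁ : ℕ))
    (h1 : p1 j₁ ≤ p2 j₁) (h12 : p1 j₁ ≤ p1 j₂) :
    max (C ((Equiv.swap j₁ j₂).trans σ₁) p1 j₁ + C ((Equiv.swap j₁ j₂).trans σ₂) p2 j₁)
        (C ((Equiv.swap j₁ j₂).trans σ₁) p1 j₂ + C ((Equiv.swap j₁ j₂).trans σ₂) p2 j₂)
      ≤ C σ₁ p1 j₂ + C σ₂ p2 j₂ ∧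
    (∀ j, j ≠ j₁ → j ≠ j₂ →
      C ((Equiv.swap j₁ j₂).trans σ₁) p1 j + C ((Equiv.swap j₁ j₂).trans σ₂) p2 j
        = C σ₁ p1 j + C σ₂ p2 j) := by
  have hadj₂ : (σ₂ j₁ : ℕ) + 1 = σ₂ j₂ := by
    have := (σ₁ j₁).isLt
    rw [hrev j₁, hrev j₂]
    omega
  have hlt₁ : σ₁ j₂ < σ₁ j₁ := Fin.lt_def.2 (by omega)
  have hlt₂ : σ₂ j₁ < σ₂ j₂ := Fin.lt_def.2 (by omega)
  have day₁_j₂ := C_swap_trans_right σ₁ p1 hlt₁.le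
  have day₁_j₁ := C_swap_trans_left_add σ₁ p1 hlt₁
  have day₂_j₁ := C_swap_trans_right σ₂ p2 hlt₂.le
  have day₂_j₂ := C_swap_trans_left_add σ₂ p2 hlt₂
  rw [swap_comm] at day₂_j₁ day₂_j₂
  have prefix₁ := C_of_val_add_one_eq σ₁ p1 hadj
  have prefix₂ := C_of_val_add_one_eq σ₂ p2 hadj₂
  refine ⟨max_le (by omega) (by omega), fun j hj₁ hj₂ => ?_⟩
  rw [C_swap_trans_of_ne_of_ne σ₁ p1 hadj hj₁ hj₂, swap_comm,
    C_swap_trans_of_ne_of_ne σ₂ p2 hadj₂ hj₂ hj₁]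

theorem stmt5 (n : ℕ) (p1 p2 : Fin n → ℕ) (σ₁ σ₂ : Equiv.Perm (Fin n)) (j₁ j₂ : Fin n)
    (hrev : ∀ j, (σ₂ j : ℕ) = n - 1 - (σ₁ j : ℕ))
    (hadj : (σ₁ j₂ : ℕ) + 1 = (σ₁ j₁ : ℕ))
    (h1 : p1 j₁ ≤ p2 j₁) (h2 : p1 j₂ ≤ p2 j₂) (h12 : p1 j₁ ≤ p1 j₂) :
    max (C ((Equiv.swap j₁ j₂).trans σ₁) p1 j₁ + C ((Equiv.swap j₁ j₂).trans σ₂) p2 j₁)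
        (C ((Equiv.swap j₁ j₂).trans σ₁) p1 j₂ + C ((Equiv.swap j₁ j₂).trans σ₂) p2 j₂)
      ≤ C σ₁ p1 j₂ + C σ₂ p2 j₂ ∧
    (∀ j, j ≠ j₁ → j ≠ j₂ →
      C ((Equiv.swap j₁ j₂).trans σ₁) p1 j + C ((Equiv.swap j₁ j₂).trans σ₂) p2 j
        = C σ₁ p1 j + C σ₂ p2 j) :=
  stmt5_general n p1 p2 σ₁ σ₂ j₁ j₂ hrev hadj h1 h12
end

section
/- A Partition instance with integers s₁,…,s_N summing to 2B has an equal-sum bipartition if and only if the two-client scheduling instance with m = N days, p(i,1) = p(i,2) = s_i for every day i, and equitability k = 3B admits a k-equitable set of schedules. -/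
/-! Scheduling a set `S` of days with client 1 first costs client 1 the amount `2·(2B) - s(S)` and
client 2 the amount `2B + s(S)`; both are at most `3B` exactly when `s(S) = B`. -/

open Finset

section
variable {ι M : Type*} [NonAssocSemiring M] (t : Finset ι) (p : ι → Prop) [DecidablePred p]
  (s : ι → M)

theorem Finset.sum_ite_two_mul_self :
    ∑ i ∈ t, (if p i then 2 * s i else s i) = ∑ i ∈ t, s i + ∑ i ∈ t with p i, s i := by
  rw [sum_filter, ← sum_add_distrib]
  refine sum_congr rfl fun i _ => ?_
  split_ifs <;> simp [two_mul]

theorem Finset.sum_ite_self_two_mul :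
    ∑ i ∈ t, (if p i then s i else 2 * s i) = ∑ i ∈ t, s i + ∑ i ∈ t with ¬p i, s i := by
  simpa only [ite_not] using sum_ite_two_mul_self t (fun i => ¬p i) s

end

theorem stmt6 (N B : ℕ) (s : Fin N → ℕ) (hsum : ∑ i, s i = 2 * B) :
    (∃ S₁ : Finset (Fin N), ∑ i ∈ S₁, s i = B) ↔
    (∃ first : Fin N → Bool,
      (∑ i, if first i then s i else 2 * s i) ≤ 3 * B ∧
      (∑ i, if first i then 2 * s i else s i) ≤ 3 * B) := by
  have costs (p : Fin N → Prop) [DecidablePred p] :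
      ((∑ i, if p i then s i else 2 * s i) ≤ 3 * B ∧
        (∑ i, if p i then 2 * s i else s i) ≤ 3 * B) ↔ ∑ i with p i, s i = B := by
    have hsplit := sum_filter_add_sum_filter_not univ p s
    rw [sum_ite_self_two_mul, sum_ite_two_mul_self]
    omega
  constructor
  · rintro ⟨S₁, hS₁⟩
    refine ⟨fun i => decide (i ∈ S₁), ?_⟩
    simpa only [decide_eq_true_eq, filter_mem_eq_inter, univ_inter, costs] using hS₁
  · rintro ⟨first, hfirst⟩
    exact ⟨_, (costs _).1 hfirst⟩
end

section
/- A Partition instance with sum 2B is a yes-instance if and only if the 4-day scheduling instance constructed from it (with special clients x and y and item clients, and equitability k = 8B) admits a k-equitable set of schedules. -/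
def Cg {α : Type} [DecidableEq α] [Fintype α] {M : ℕ} (pos : α ≃ Fin M)
    (p : α → ℕ) (c : α) : ℕ :=
  ∑ c' ∈ Finset.univ.filter (fun c' => pos c' ≤ pos c), p c'

def pRed (N B : ℕ) (s : Fin N → ℕ) : Fin 4 → (Fin N ⊕ Bool) → ℕ :=
  fun i c =>
    match c with
    | Sum.inl j => if i = 1 ∨ i = 3 then s j else 0
    | Sum.inr false => if i = 0 then 2 * B else if i = 1 then 5 * B else 0
    | Sum.inr true => if i = 2 then 2 * B else if i = 3 then 5 * B else 0

/-!
Days are numbered `0, …, 3`; the special clients are `x = .inr false` and `y = .inr true`.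

If `S` is half of the partition, schedule on day 1 first `S`, then `x`, then the other items, and
on day 3 first the other items, then `y`, then `S`, with `x` last on day 0 and `y` last on day 2;
every client then finishes in total within `8B`.

Conversely, let `T` be the items before `x` on day 1 and `D` those before `y` on day 3. Client `x`
already spends `2B` on day 0 and `5B + ∑ T` on day 1, so `∑ T ≤ B`; likewise `∑ D ≤ B`. An item in
neither set waits for both `x` and `y`, costing `10B > 8B`, so `T ∪ D` covers all items and
`∑ T = B` (when `B > 0`; for `B = 0` the empty set is a solution).
-/

open Finset

lemma exists_equiv_Cg_le_sum_key_le {α : Type} [DecidableEq α] [Fintype α] {M : ℕ}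
    (hM : Fintype.card α = M) (key : α → ℕ) :
    ∃ pos : α ≃ Fin M, ∀ p c, Cg pos p c ≤ ∑ c' ∈ univ.filter (fun c' => key c' ≤ key c), p c' := by
  let e := Fintype.equivFinOfCardEq hM
  refine ⟨e.trans (Tuple.sort (key ∘ e.symm)).symm, fun p c => sum_le_sum_of_subset ?_⟩
  intro a ha
  simp only [mem_filter, mem_univ, true_and] at ha ⊢
  simpa using Tuple.monotone_sort (key ∘ e.symm) ha

lemma apply_le_Cg {α : Type} [DecidableEq α] [Fintype α] {M : ℕ} (pos : α ≃ Fin M)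
    (p : α → ℕ) {c c' : α} (h : pos c' ≤ pos c) : p c' ≤ Cg pos p c :=
  single_le_sum (fun _ _ => Nat.zero_le _) (by simpa using h)

lemma sum_ite_ite_mem_le {ι : Type} [Fintype ι] [DecidableEq ι] (S : Finset ι) (f : ι → ℕ)
    (a b k : ℕ) :
    ∑ j, (if (if j ∈ S then a else b) ≤ k then f j else 0) =
      (if a ≤ k then ∑ j ∈ S, f j else 0) + (if b ≤ k then ∑ j ∈ Sᶜ, f j else 0) := by
  rw [← sum_add_sum_compl S]
  congr 1
  · rw [sum_congr rfl fun j hj => by rw [if_pos hj], sum_ite_irrel, sum_const_zero]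
  · rw [sum_congr rfl fun j hj => by rw [if_neg (mem_compl.mp hj)], sum_ite_irrel, sum_const_zero]

/-- On day `i`, clients are scheduled by increasing `partitionKey S i`. -/
def partitionKey {N : ℕ} (S : Finset (Fin N)) : Fin 4 → Fin N ⊕ Bool → ℕ :=
  ![fun c => if c = .inr false then 1 else 0,
    fun c => match c with
      | .inl j => if j ∈ S then 2 else 4 | .inr false => 3 | .inr true => 1,
    fun c => if c = .inr true then 1 else 0,
    fun c => match c with
      | .inl j => if j ∈ S then 4 else 2 | .inr false => 1 | .inr true => 3]

lemma exists_equitable_of_partition {N B : ℕ} {s : Fin N → ℕ} (hsum : ∑ j, s j = 2 * B)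
    {S : Finset (Fin N)} (hS : ∑ j ∈ S, s j = B) :
    ∃ σ : Fin 4 → ((Fin N ⊕ Bool) ≃ Fin (N + 2)),
      ∀ c, ∑ i, Cg (σ i) (pRed N B s i) c ≤ 8 * B := by
  have hSc : ∑ j ∈ Sᶜ, s j = B := by
    have := sum_add_sum_compl S s
    omega
  choose σ hσ using fun i => exists_equiv_Cg_le_sum_key_le (M := N + 2) (by simp) (partitionKey S i)
  refine ⟨σ, fun c => (sum_le_sum fun i _ => hσ i _ c).trans ?_⟩
  rcases c with j | _ | _
  · by_cases hj : j ∈ S <;>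
      simp [Fin.sum_univ_four, partitionKey, pRed, sum_filter, Fintype.sum_sum_type,
        sum_ite_ite_mem_le, hS, hSc, hj] <;> omega
  all_goals simp [Fin.sum_univ_four, partitionKey, pRed, sum_filter, Fintype.sum_sum_type,
    sum_ite_ite_mem_le, hS, hSc]; omega

lemma exists_partition_of_equitable {N B : ℕ} {s : Fin N → ℕ} (hsum : ∑ j, s j = 2 * B)
    {σ : Fin 4 → ((Fin N ⊕ Bool) ≃ Fin (N + 2))}
    (hσ : ∀ c, ∑ i, Cg (σ i) (pRed N B s i) c ≤ 8 * B) :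
    ∃ S : Finset (Fin N), ∑ j ∈ S, s j = B := by
  obtain rfl | hB := Nat.eq_zero_or_pos B
  · exact ⟨∅, rfl⟩
  set T := univ.filter fun j => σ 1 (.inl j) ≤ σ 1 (.inr false)
  set D := univ.filter fun j => σ 3 (.inl j) ≤ σ 3 (.inr true)
  have hT : ∑ j ∈ T, s j ≤ B := by
    have h0 := apply_le_Cg (σ 0) (pRed N B s 0) (le_refl (σ 0 (.inr false)))
    have h1 : Cg (σ 1) (pRed N B s 1) (.inr false) = ∑ j ∈ T, s j + 5 * B := by
      simp [Cg, pRed, sum_filter, Fintype.sum_sum_type, T]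
    have hx := hσ (.inr false)
    simp only [Fin.sum_univ_four] at hx
    simp [pRed] at h0
    omega
  have hD : ∑ j ∈ D, s j ≤ B := by
    have h2 := apply_le_Cg (σ 2) (pRed N B s 2) (le_refl (σ 2 (.inr true)))
    have h3 : Cg (σ 3) (pRed N B s 3) (.inr true) = ∑ j ∈ D, s j + 5 * B := by
      simp [Cg, pRed, sum_filter, Fintype.sum_sum_type, D]
    have hy := hσ (.inr true)
    simp only [Fin.sum_univ_four] at hy
    simp [pRed] at h2
    omega
  have hTD : T ∪ D = univ := by
    refine eq_univ_of_forall fun j => ?_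
    by_contra hj
    simp only [mem_union, mem_filter, mem_univ, true_and, not_or, not_le, T, D] at hj
    have h1 := apply_le_Cg (σ 1) (pRed N B s 1) hj.1.le
    have h3 := apply_le_Cg (σ 3) (pRed N B s 3) hj.2.le
    have hj := hσ (.inl j)
    simp only [Fin.sum_univ_four] at hj
    simp [pRed] at h1 h3
    omega
  refine ⟨T, le_antisymm hT ?_⟩
  have := sum_union_inter (s₁ := T) (s₂ := D) (f := s)
  rw [hTD, hsum] at this
  omega

theorem stmt9 (N B : ℕ) (s : Fin N → ℕ) (hsum : ∑ j, s j = 2 * B) :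
    (∃ S₁ : Finset (Fin N), ∑ j ∈ S₁, s j = B) ↔
    (∃ σ : Fin 4 → ((Fin N ⊕ Bool) ≃ Fin (N + 2)),
      ∀ c, ∑ i, Cg (σ i) (pRed N B s i) c ≤ 8 * B) :=
  ⟨fun ⟨_, hS⟩ => exists_equitable_of_partition hsum hS,
    fun ⟨_, hσ⟩ => exists_partition_of_equitable hsum hσ⟩
end

section
/- In the 4-day Partition-reduction instance, if a set of schedules is 8B-equitable, then the total s-weight of item clients scheduled before client x on day 2 is exactly B. -/
/-!
Client `x` is `Sum.inr false`, client `y` is `Sum.inr true`, and days are indexed from `0`, so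
day 2 is `σ 1`. Let `W` (resp. `W'`) be the weight of the items before `x` on day 2 (resp. before
`y` on day 4). The completion times of `x` give `2B + 5B + W ≤ 8B`, so `W ≤ B`, and likewise
`W' ≤ B`. If `W < B`, the items after `x` on day 2 weigh `2B - W > B ≥ W'`, so one of them is also
after `y` on day 4; its completion times on these two days alone add up to at least `10B > 8B`.
-/

open Finset

section Cg

variable {α : Type} [DecidableEq α] [Fintype α] {M : ℕ} (pos : α ≃ Fin M) (p : α → ℕ)

theorem sum_le_Cg {c : α} {T : Finset α} (hT : ∀ a ∈ T, pos a ≤ pos c) :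
    ∑ a ∈ T, p a ≤ Cg pos p c :=
  sum_le_sum_of_subset fun a ha => mem_filter.2 ⟨mem_univ a, hT a ha⟩

theorem le_Cg_self (c : α) : p c ≤ Cg pos p c := by
  simpa using sum_le_Cg pos p (T := {c}) (by simp)

end Cg

def itemsBefore {N M : ℕ} (pos : (Fin N ⊕ Bool) ≃ Fin M) (b : Bool) : Finset (Fin N) :=
  univ.filter fun j => pos (.inl j) < pos (.inr b)

theorem mem_itemsBefore {N M : ℕ} {pos : (Fin N ⊕ Bool) ≃ Fin M} {b : Bool} {j : Fin N} :
    j ∈ itemsBefore pos b ↔ pos (.inl j) < pos (.inr b) := by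
  simp [itemsBefore]

section pRed

variable {N B : ℕ} {s : Fin N → ℕ} {M : ℕ} (pos : (Fin N ⊕ Bool) ≃ Fin M) {i : Fin 4}

theorem pRed_inl_of_item_day (hi : i = 1 ∨ i = 3) (j : Fin N) :
    pRed N B s i (.inl j) = s j := by
  simp [pRed, hi]

theorem pRed_add_sum_itemsBefore_le_Cg (hi : i = 1 ∨ i = 3) (b : Bool) :
    pRed N B s i (.inr b) + ∑ j ∈ itemsBefore pos b, s j ≤ Cg pos (pRed N B s i) (.inr b) := by
  have hT := sum_le_Cg pos (pRed N B s i) (c := .inr b)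
    (T := insert (.inr b) ((itemsBefore pos b).map .inl))
    (by simpa [mem_itemsBefore] using fun j hj => hj.le)
  rw [sum_insert (by simp), sum_map] at hT
  simpa only [Function.Embedding.inl_apply, pRed_inl_of_item_day hi] using hT

theorem pRed_add_le_Cg_inl (hi : i = 1 ∨ i = 3) {b : Bool} {j : Fin N}
    (hj : pos (.inr b) ≤ pos (.inl j)) :
    pRed N B s i (.inr b) + s j ≤ Cg pos (pRed N B s i) (.inl j) := by
  have hT := sum_le_Cg pos (pRed N B s i) (c := .inl j) (T := {.inr b, .inl j}) (by simpa using hj)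
  rwa [sum_pair (by simp), pRed_inl_of_item_day hi] at hT

end pRed

theorem sum_itemsBefore_le_of_equitable {N B M : ℕ} {s : Fin N → ℕ}
    {σ : Fin 4 → ((Fin N ⊕ Bool) ≃ Fin M)}
    (heq : ∀ c, ∑ i, Cg (σ i) (pRed N B s i) c ≤ 8 * B) {b : Bool} {i k : Fin 4} (hik : i ≠ k)
    (hk : k = 1 ∨ k = 3) (hpi : pRed N B s i (.inr b) = 2 * B)
    (hpk : pRed N B s k (.inr b) = 5 * B) :
    ∑ j ∈ itemsBefore (σ k) b, s j ≤ B := by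
  have hday_i := le_Cg_self (σ i) (pRed N B s i) (.inr b)
  have hday_k := pRed_add_sum_itemsBefore_le_Cg (B := B) (s := s) (σ k) hk b
  have hdays : Cg (σ i) (pRed N B s i) (.inr b) + Cg (σ k) (pRed N B s k) (.inr b) ≤
      ∑ d, Cg (σ d) (pRed N B s d) (.inr b) := by
    rw [← sum_pair (f := fun d => Cg (σ d) (pRed N B s d) (.inr b)) hik]
    exact sum_le_sum_of_subset (subset_univ _)
  have := heq (.inr b)
  omega

theorem stmt11 (N B : ℕ) (s : Fin N → ℕ) (hsum : ∑ j, s j = 2 * B)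
    (σ : Fin 4 → ((Fin N ⊕ Bool) ≃ Fin (N + 2)))
    (heq : ∀ c, ∑ i, Cg (σ i) (pRed N B s i) c ≤ 8 * B) :
    ∑ j ∈ Finset.univ.filter
        (fun j => (σ 1) (Sum.inl j) < (σ 1) (Sum.inr false)), s j = B := by
  change ∑ j ∈ itemsBefore (σ 1) false, s j = B
  have hx : ∑ j ∈ itemsBefore (σ 1) false, s j ≤ B :=
    sum_itemsBefore_le_of_equitable heq (i := 0) (by decide) (.inl rfl) rfl rfl
  have hy : ∑ j ∈ itemsBefore (σ 3) true, s j ≤ B :=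
    sum_itemsBefore_le_of_equitable heq (i := 2) (by decide) (.inr rfl) rfl rfl
  refine hx.antisymm (not_lt.1 fun hlt => ?_)
  obtain ⟨j, hj1, hj3⟩ : ∃ j, j ∉ itemsBefore (σ 1) false ∧ j ∉ itemsBefore (σ 3) true := by
    by_contra! hsub
    have hcompl := sum_le_sum_of_subset (f := s) fun j hj => hsub j (mem_compl.1 hj)
    have := sum_add_sum_compl (itemsBefore (σ 1) false) s
    omega
  rw [mem_itemsBefore, not_lt] at hj1 hj3
  have hday1 : 5 * B + s j ≤ Cg (σ 1) (pRed N B s 1) (.inl j) :=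
    pRed_add_le_Cg_inl (σ 1) (.inl rfl) hj1
  have hday3 : 5 * B + s j ≤ Cg (σ 3) (pRed N B s 3) (.inl j) :=
    pRed_add_le_Cg_inl (σ 3) (.inr rfl) hj3
  have := heq (.inl j)
  rw [Fin.sum_univ_four] at this
  omega
end

section
/- In the Unary Bin Packing reduction instance with b ≥ 2 bins, in any k-equitable set of schedules with k = B·(b³ − b + 1), every item client must be scheduled before the bin client x on day x₂ for at least one bin x. -/
def pBin (I b B : ℕ) (s : Fin I → ℕ) : (Fin b × Bool) → (Fin I ⊕ Fin b) → ℕ :=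
  fun d c =>
    match d, c with
    | (x, false), Sum.inr x' => if x' = x then B * (b ^ 3 - b ^ 2 - b) else 0
    | (x, true), Sum.inr x' => if x' = x then B * b ^ 2 else 0
    | (_, true), Sum.inl j => s j
    | (_, false), Sum.inl _ => 0

theorem add_le_Cg_of_le {α : Type} [DecidableEq α] [Fintype α] {M : ℕ} (pos : α ≃ Fin M)
    (p : α → ℕ) {c c' : α} (hne : c' ≠ c) (hle : pos c' ≤ pos c) :
    p c' + p c ≤ Cg pos p c := by
  rw [← Finset.sum_pair hne]
  refine Finset.sum_le_sum_of_subset fun d hd => ?_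
  rcases Finset.mem_insert.mp hd with rfl | hd
  · simp [hle]
  · simp [Finset.mem_singleton.mp hd]

theorem sum_true_le_sum {β M : Type*} [Fintype β] [AddCommMonoid M] [PartialOrder M]
    [CanonicallyOrderedAdd M] [IsOrderedAddMonoid M] (f : β × Bool → M) :
    ∑ x, f (x, true) ≤ ∑ i, f i := by
  rw [Fintype.sum_prod_type]
  exact Finset.sum_le_sum fun x _ => by simp

theorem le_Cg_pBin_inl_of_inr_le {I b B : ℕ} (s : Fin I → ℕ) (σ : (Fin I ⊕ Fin b) ≃ Fin (I + b))
    {x : Fin b} {j : Fin I} (hle : σ (Sum.inr x) ≤ σ (Sum.inl j)) :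
    B * b ^ 2 + s j ≤ Cg σ (pBin I b B s (x, true)) (Sum.inl j) := by
  simpa [pBin] using add_le_Cg_of_le σ (pBin I b B s (x, true)) Sum.inr_ne_inl hle

theorem stmt13_general (I b B : ℕ) (hb : 2 ≤ b) (s : Fin I → ℕ)
    (hpos : ∀ j, 1 ≤ s j)
    (σ : (Fin b × Bool) → ((Fin I ⊕ Fin b) ≃ Fin (I + b)))
    (heq : ∀ c, ∑ i, Cg (σ i) (pBin I b B s i) c ≤ B * (b ^ 3 - b + 1)) :
    ∀ j : Fin I, ∃ x : Fin b,
      (σ (x, true)) (Sum.inl j) < (σ (x, true)) (Sum.inr x) := by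
  intro j
  by_contra! hlate
  have htotal : b * (B * b ^ 2 + s j) ≤ B * (b ^ 3 - b + 1) :=
    calc b * (B * b ^ 2 + s j)
        = ∑ _x : Fin b, (B * b ^ 2 + s j) := by simp
      _ ≤ ∑ x : Fin b, Cg (σ (x, true)) (pBin I b B s (x, true)) (Sum.inl j) :=
          Finset.sum_le_sum fun x _ => le_Cg_pBin_inl_of_inr_le s _ (hlate x)
      _ ≤ ∑ i, Cg (σ i) (pBin I b B s i) (Sum.inl j) :=
          sum_true_le_sum fun i => Cg (σ i) (pBin I b B s i) (Sum.inl j)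
      _ ≤ B * (b ^ 3 - b + 1) := heq _
  have hcube : b ≤ b ^ 3 := Nat.le_self_pow (by norm_num) b
  have hs : b ≤ b * s j := Nat.le_mul_of_pos_right b (hpos j)
  have hbound : B * (b ^ 3 - b + 1) ≤ B * b ^ 3 := Nat.mul_le_mul_left B (by omega)
  have hexpand : b * (B * b ^ 2 + s j) = B * b ^ 3 + b * s j := by ring
  omega

theorem stmt13 (I b B : ℕ) (hb : 2 ≤ b) (s : Fin I → ℕ)
    (hsum : ∑ j, s j ≤ b * B) (hpos : ∀ j, 1 ≤ s j)
    (σ : (Fin b × Bool) → ((Fin I ⊕ Fin b) ≃ Fin (I + b)))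
    (heq : ∀ c, ∑ i, Cg (σ i) (pBin I b B s i) c ≤ B * (b ^ 3 - b + 1)) :
    ∀ j : Fin I, ∃ x : Fin b,
      (σ (x, true)) (Sum.inl j) < (σ (x, true)) (Sum.inr x) :=
  stmt13_general I b B hb s hpos σ heq
end

section
/- In the Unary Bin Packing reduction, given a valid packing of items into b bins of capacity B, the constructed set of schedules is k-equitable with k = B·(b³ − b + 1), assuming b ≥ 2. -/
/-!
Zero jobs are scheduled first, so a client waits only on the days where its own job is nonzero.
On day `x₁ = (x, false)` only the bin client `x` has a job, and on day `x₂ = (x, true)` the jobs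
finished when client `x` completes are those of the items of bin `x`, of total size at most `B`;
so client `x` waits at most `B(b³ - b² - b) + B b² + B`. An item client of bin `x` waits at most
`B` on day `x₂`, and on each of the `b - 1` other days `y₂` at most the whole load
`∑ s + B b² ≤ B b + B b²` of that day.
-/

open Finset

section CompletionTime

variable {α : Type} [DecidableEq α] [Fintype α] {M : ℕ} (pos : α ≃ Fin M) (p : α → ℕ)

theorem Cg_le_sum_of_subset {c : α} {S : Finset α}
    (h : ∀ c', pos c' ≤ pos c → p c' ≠ 0 → c' ∈ S) :
    Cg pos p c ≤ ∑ c' ∈ S, p c' := by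
  rw [Cg, ← sum_filter_ne_zero]
  refine sum_le_sum_of_subset fun c' hc' => ?_
  simp only [mem_filter, mem_univ, true_and] at hc'
  exact h c' hc'.1 hc'.2

theorem Cg_le_sum (c : α) : Cg pos p c ≤ ∑ c', p c' :=
  Cg_le_sum_of_subset pos p fun c' _ _ => mem_univ c'

variable {pos p} in
theorem Cg_eq_zero_of_eq_zero (hzero : ∀ c c', p c = 0 → 0 < p c' → pos c < pos c')
    {c : α} (hc : p c = 0) : Cg pos p c = 0 := by
  refine Nat.eq_zero_of_le_zero ((Cg_le_sum_of_subset pos p (S := ∅) fun c' hle hne => ?_).trans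
    (by simp))
  exact absurd hle (hzero c c' hc (Nat.pos_of_ne_zero hne)).not_ge

end CompletionTime

theorem mul_cube_sub_sq_sub_add_eq {b : ℕ} (B : ℕ) (hb : 2 ≤ b) :
    B * (b ^ 3 - b ^ 2 - b) + (B * b ^ 2 + B) = B * (b ^ 3 - b + 1) := by
  have h : b ^ 2 + b ≤ b ^ 3 := by nlinarith
  rw [Nat.sub_sub]
  zify [h, (by omega : b ≤ b ^ 3)]
  ring

theorem add_pred_mul_sq_add_eq {b : ℕ} (B : ℕ) (hb : 1 ≤ b) :
    B + (b - 1) * (B * b ^ 2 + B * b) = B * (b ^ 3 - b + 1) := by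
  have h : b ≤ b ^ 3 := Nat.le_self_pow (by norm_num) b
  zify [hb, h]
  ring

section BinPacking

variable {I b B : ℕ} {s : Fin I → ℕ}

def binItems (assign : Fin I → Fin b) (x : Fin b) : Finset (Fin I) :=
  univ.filter fun j => assign j = x

theorem sum_le_card_mul_of_binItems {assign : Fin I → Fin b}
    (hcap : ∀ x, ∑ j ∈ binItems assign x, s j ≤ B) : ∑ j, s j ≤ b * B := by
  rw [← sum_fiberwise univ assign s]
  exact (sum_le_card_nsmul univ _ B fun x _ => hcap x).trans (by simp)

theorem pBin_false_inl (x : Fin b) (j : Fin I) : pBin I b B s (x, false) (Sum.inl j) = 0 := rfl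

theorem eq_of_pBin_inr_ne_zero {x x' : Fin b} {t : Bool}
    (h : pBin I b B s (x, t) (Sum.inr x') ≠ 0) : x' = x := by
  by_contra hx
  cases t <;> simp [pBin, hx] at h

theorem eq_inr_of_pBin_false_ne_zero {x : Fin b} {c : Fin I ⊕ Fin b}
    (h : pBin I b B s (x, false) c ≠ 0) : c = Sum.inr x := by
  rcases c with j | x'
  · exact absurd (pBin_false_inl x j) h
  · rw [eq_of_pBin_inr_ne_zero h]

theorem sum_pBin_true (x : Fin b) :
    ∑ c, pBin I b B s (x, true) c = ∑ j, s j + B * b ^ 2 := by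
  simp [Fintype.sum_sum_type, pBin]

theorem sum_pBin_true_binItems (assign : Fin I → Fin b) (x : Fin b) :
    ∑ c ∈ (binItems assign x).map .inl, pBin I b B s (x, true) c = ∑ j ∈ binItems assign x, s j :=
  sum_map _ _ _

variable {assign : Fin I → Fin b} {σ : (Fin b × Bool) → ((Fin I ⊕ Fin b) ≃ Fin (I + b))}

theorem mem_binItems_of_lt_bin
    (horder : ∀ (x : Fin b) (j : Fin I),
      ((σ (x, true)) (Sum.inl j) < (σ (x, true)) (Sum.inr x) ↔ assign j = x))
    {x : Fin b} {c : Fin I ⊕ Fin b} (hlt : σ (x, true) c < σ (x, true) (Sum.inr x))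
    (hne : pBin I b B s (x, true) c ≠ 0) : c ∈ (binItems assign x).map .inl := by
  rcases c with j | x'
  · simpa [binItems] using (horder x j).mp hlt
  · rw [eq_of_pBin_inr_ne_zero hne] at hlt
    exact absurd hlt (lt_irrefl _)

theorem Cg_pBin_bin_false_le (x : Fin b) :
    Cg (σ (x, false)) (pBin I b B s (x, false)) (Sum.inr x) ≤ B * (b ^ 3 - b ^ 2 - b) := by
  refine (Cg_le_sum_of_subset _ _ (S := {Sum.inr x}) fun c _ hne => ?_).trans (by simp [pBin])
  rw [eq_inr_of_pBin_false_ne_zero hne, mem_singleton]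

theorem Cg_pBin_bin_true_le
    (hcap : ∀ x, ∑ j ∈ binItems assign x, s j ≤ B)
    (horder : ∀ (x : Fin b) (j : Fin I),
      ((σ (x, true)) (Sum.inl j) < (σ (x, true)) (Sum.inr x) ↔ assign j = x))
    (x : Fin b) :
    Cg (σ (x, true)) (pBin I b B s (x, true)) (Sum.inr x) ≤ B * b ^ 2 + B := by
  have hS : ∀ c, σ (x, true) c ≤ σ (x, true) (Sum.inr x) → pBin I b B s (x, true) c ≠ 0 →
      c ∈ insert (Sum.inr x) ((binItems assign x).map .inl) := fun c hle hne => by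
    rcases hle.eq_or_lt with heq | hlt
    · rw [(σ (x, true)).injective heq]
      exact mem_insert_self _ _
    · exact mem_insert_of_mem (mem_binItems_of_lt_bin horder hlt hne)
  refine (Cg_le_sum_of_subset _ _ hS).trans ?_
  rw [sum_insert (by simp), sum_pBin_true_binItems]
  simpa [pBin, add_comm] using hcap x

theorem Cg_pBin_item_own_day_le
    (hcap : ∀ x, ∑ j ∈ binItems assign x, s j ≤ B)
    (horder : ∀ (x : Fin b) (j : Fin I),
      ((σ (x, true)) (Sum.inl j) < (σ (x, true)) (Sum.inr x) ↔ assign j = x))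
    (j : Fin I) :
    Cg (σ (assign j, true)) (pBin I b B s (assign j, true)) (Sum.inl j) ≤ B := by
  have hj := (horder (assign j) j).mpr rfl
  refine (Cg_le_sum_of_subset _ _ fun c hle hne => mem_binItems_of_lt_bin horder
    (hle.trans_lt hj) hne).trans ?_
  rw [sum_pBin_true_binItems]
  exact hcap _

theorem Cg_pBin_true_le (hcap : ∀ x, ∑ j ∈ binItems assign x, s j ≤ B)
    (x : Fin b) (c : Fin I ⊕ Fin b) :
    Cg (σ (x, true)) (pBin I b B s (x, true)) c ≤ B * b ^ 2 + B * b := by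
  refine (Cg_le_sum _ _ c).trans ?_
  rw [sum_pBin_true]
  linarith [sum_le_card_mul_of_binItems hcap]

theorem sum_Cg_pBin_inr_le (hb : 2 ≤ b)
    (hzero : ∀ i c c', pBin I b B s i c = 0 → 0 < pBin I b B s i c' → (σ i) c < (σ i) c')
    (hcap : ∀ x, ∑ j ∈ binItems assign x, s j ≤ B)
    (horder : ∀ (x : Fin b) (j : Fin I),
      ((σ (x, true)) (Sum.inl j) < (σ (x, true)) (Sum.inr x) ↔ assign j = x))
    (x : Fin b) :
    ∑ i, Cg (σ i) (pBin I b B s i) (Sum.inr x) ≤ B * (b ^ 3 - b + 1) := by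
  have hidle : ∀ i ∈ univ, i ∉ ({(x, false), (x, true)} : Finset _) →
      Cg (σ i) (pBin I b B s i) (Sum.inr x) = 0 := by
    rintro ⟨x', t⟩ - hi
    refine Cg_eq_zero_of_eq_zero (hzero _) (not_not.mp fun hne => hi ?_)
    cases t <;> simp [eq_of_pBin_inr_ne_zero hne]
  rw [← sum_subset (subset_univ _) hidle, sum_pair (by simp),
    ← mul_cube_sub_sq_sub_add_eq B hb]
  exact add_le_add (Cg_pBin_bin_false_le x) (Cg_pBin_bin_true_le hcap horder x)

theorem sum_Cg_pBin_inl_le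
    (hzero : ∀ i c c', pBin I b B s i c = 0 → 0 < pBin I b B s i c' → (σ i) c < (σ i) c')
    (hcap : ∀ x, ∑ j ∈ binItems assign x, s j ≤ B)
    (horder : ∀ (x : Fin b) (j : Fin I),
      ((σ (x, true)) (Sum.inl j) < (σ (x, true)) (Sum.inr x) ↔ assign j = x))
    (j : Fin I) :
    ∑ i, Cg (σ i) (pBin I b B s i) (Sum.inl j) ≤ B * (b ^ 3 - b + 1) := by
  have hb : 1 ≤ b := Fin.pos_iff_nonempty.mpr ⟨assign j⟩
  have hidle : ∀ x, Cg (σ (x, false)) (pBin I b B s (x, false)) (Sum.inl j) = 0 :=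
    fun x => Cg_eq_zero_of_eq_zero (hzero _) (pBin_false_inl x j)
  simp only [Fintype.sum_prod_type, Fintype.sum_bool, hidle, add_zero]
  rw [← add_sum_erase _ _ (mem_univ (assign j)), ← add_pred_mul_sq_add_eq B hb]
  refine add_le_add (Cg_pBin_item_own_day_le hcap horder j) ?_
  simpa using sum_le_card_nsmul (univ.erase (assign j)) _ _
    fun x _ => Cg_pBin_true_le (σ := σ) hcap x (Sum.inl j)

end BinPacking

theorem stmt14 (I b B : ℕ) (hb : 2 ≤ b) (s : Fin I → ℕ)
    (assign : Fin I → Fin b)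
    (hcap : ∀ x, ∑ j ∈ Finset.univ.filter (fun j => assign j = x), s j ≤ B)
    (σ : (Fin b × Bool) → ((Fin I ⊕ Fin b) ≃ Fin (I + b)))
    (horder : ∀ (x : Fin b) (j : Fin I),
      ((σ (x, true)) (Sum.inl j) < (σ (x, true)) (Sum.inr x) ↔ assign j = x))
    (hzero : ∀ i c c', pBin I b B s i c = 0 → 0 < pBin I b B s i c' →
      (σ i) c < (σ i) c') :
    ∀ c, ∑ i, Cg (σ i) (pBin I b B s i) c ≤ B * (b ^ 3 - b + 1) := by
  rintro (j | x)
  · exact sum_Cg_pBin_inl_le hzero hcap horder j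
  · exact sum_Cg_pBin_inr_le hb hzero hcap horder x
end

section
/- The dynamic-programming recurrence for few clients is correct: T(i, k₁,…,k_n) is true if and only if there exists a set of schedules for days 1 through i such that client j's total completion time over those days is at most k_j for every j. -/
def T (n : ℕ) (p : ℕ → Fin n → ℕ) : ℕ → (Fin n → ℤ) → Prop
  | 0, ks => ∀ j, ks j ≠ -1
  | i + 1, ks => ∃ σ : Equiv.Perm (Fin n),
      T n p i (fun j => max (-1) (ks j - (C σ (p (i + 1)) j : ℤ)))

/-!
Induction on the number of days. Clamping the residual budget at `-1` loses nothing, because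
the total completion time of the remaining days is nonnegative: it fits into `max (-1) (k - c)`
exactly when it fits into `k - c`. Hence a schedule for day `i + 1` followed by schedules for
days `1, …, i` within the residual budgets is the same as schedules for days `1, …, i + 1`
within the original budgets.
-/

lemma Finset.sum_Icc_succ_top_update {M β : Type*} [AddCommMonoid M] (g : ℕ → β → M)
    (σ : ℕ → β) (τ : β) (i : ℕ) :
    ∑ i' ∈ Finset.Icc 1 (i + 1), g i' (Function.update σ (i + 1) τ i') =
      ∑ i' ∈ Finset.Icc 1 i, g i' (σ i') + g (i + 1) τ := by
  rw [Finset.sum_Icc_succ_top (by omega), Function.update_self]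
  congr 1
  refine Finset.sum_congr rfl fun i' hi' => ?_
  rw [Function.update_of_ne (by grind)]

lemma Int.le_max_neg_one_sub_iff {s k c : ℤ} (hs : 0 ≤ s) :
    s ≤ max (-1) (k - c) ↔ s + c ≤ k := by
  omega

lemma T_zero_iff {n : ℕ} (p : ℕ → Fin n → ℕ) {ks : Fin n → ℤ} (hks : ∀ j, -1 ≤ ks j) :
    T n p 0 ks ↔ ∀ j, 0 ≤ ks j :=
  forall_congr' fun j => by have := hks j; omega

lemma T_iff_exists_schedule {n : ℕ} (p : ℕ → Fin n → ℕ) (i : ℕ) {ks : Fin n → ℤ}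
    (hks : ∀ j, -1 ≤ ks j) :
    T n p i ks ↔ ∃ σ : ℕ → Equiv.Perm (Fin n),
      ∀ j, ∑ i' ∈ Finset.Icc 1 i, (C (σ i') (p i') j : ℤ) ≤ ks j := by
  induction i generalizing ks with
  | zero => simp [T_zero_iff p hks]
  | succ i ih =>
    have total_nonneg (σ : ℕ → Equiv.Perm (Fin n)) (j : Fin n) :
        0 ≤ ∑ i' ∈ Finset.Icc 1 i, (C (σ i') (p i') j : ℤ) :=
      Finset.sum_nonneg fun _ _ => Int.natCast_nonneg _
    simp only [T, ih fun _ => le_max_left _ _, Int.le_max_neg_one_sub_iff (total_nonneg _ _)]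
    constructor
    · rintro ⟨τ, σ, hσ⟩
      exact ⟨Function.update σ (i + 1) τ, fun j => by
        rw [Finset.sum_Icc_succ_top_update (fun i' τ => (C τ (p i') j : ℤ))]
        exact hσ j⟩
    · rintro ⟨σ, hσ⟩
      exact ⟨σ (i + 1), σ, fun j => by
        simpa only [Finset.sum_Icc_succ_top (Nat.le_add_left 1 i)] using hσ j⟩

theorem stmt18 (n : ℕ) (p : ℕ → Fin n → ℕ) (i : ℕ) (ks : Fin n → ℤ)
    (hks : ∀ j, 0 ≤ ks j) :
    T n p i ks ↔ ∃ σ : ℕ → Equiv.Perm (Fin n),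
      ∀ j, ∑ i' ∈ Finset.Icc 1 i, (C (σ i') (p i') j : ℤ) ≤ ks j :=
  T_iff_exists_schedule p i fun j => (hks j).trans' (by norm_num)
end
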